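/- arXiv:1705.09784 — 9 statements merged into one kernel-verified Lean document; each statement's English description precedes it below -/
import Mathlib

section
/- Let f : [m,M] → ℝ be twice differentiable with f'' ≤ β on [m,M]. Then for every t ∈ [m,M], f(t) ≥ L(t) - (β/2)·((M+m)t - mM - t²), where L(t) is the secant line through (m, f(m)) and (M, f(M)). -/
/-!
The hypothesis `f'' ≤ β` makes `x ↦ f x - β / 2 * x ^ 2` concave on `[m, M]`, so it lies above
its secant there. The secant of `x ↦ x ^ 2` over `[m, M]` is `t ↦ (M + m) * t - m * M`, which
turns that inequality into the claimed one.
-/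

open Set

theorem ConcaveOn.secant_le_of_mem_Icc {f : ℝ → ℝ} {m M t : ℝ} (hf : ConcaveOn ℝ (Icc m M) f)
    (hmM : m < M) (ht : t ∈ Icc m M) :
    (M - t) / (M - m) * f m + (t - m) / (M - m) * f M ≤ f t := by
  have hMm : 0 < M - m := sub_pos.2 hmM
  have hpt : (M - t) / (M - m) * m + (t - m) / (M - m) * M = t := by
    field_simp
    ring
  have key := hf.2 (left_mem_Icc.2 hmM.le) (right_mem_Icc.2 hmM.le)
    (div_nonneg (sub_nonneg.2 ht.2) hMm.le) (div_nonneg (sub_nonneg.2 ht.1) hMm.le)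
    (by field_simp; ring)
  simpa only [smul_eq_mul, hpt] using key

theorem concaveOn_sub_mul_sq_of_deriv2_le {D : Set ℝ} (hD : Convex ℝ D) {f f' f'' : ℝ → ℝ}
    {β : ℝ} (hf : ∀ x ∈ D, HasDerivAt f (f' x) x)
    (hf' : ∀ x ∈ interior D, HasDerivAt f' (f'' x) x) (hβ : ∀ x ∈ interior D, f'' x ≤ β) :
    ConcaveOn ℝ D (fun x ↦ f x - β / 2 * x ^ 2) := by
  have hsq (x : ℝ) : HasDerivAt (fun x ↦ β / 2 * x ^ 2) (β * x) x :=
    ((hasDerivAt_pow 2 x).const_mul (β / 2)).congr_deriv (by push_cast; ring)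
  refine concaveOn_of_hasDerivWithinAt2_nonpos hD (f' := fun x ↦ f' x - β * x)
    (f'' := fun x ↦ f'' x - β) ?_ ?_ ?_ ?_
  · exact fun x hx ↦ ((hf x hx).sub (hsq x)).continuousAt.continuousWithinAt
  · exact fun x hx ↦ ((hf x (interior_subset hx)).sub (hsq x)).hasDerivWithinAt
  · exact fun x hx ↦
      ((hf' x hx).sub ((hasDerivAt_id x).const_mul β)).hasDerivWithinAt.congr_deriv (by simp)
  · exact fun x hx ↦ sub_nonpos.2 (hβ x hx)

/-- Let `f` be twice differentiable on an open interval containing `[m, M]` with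
`f'' ≤ β` on `[m, M]`.  Then for every `t ∈ [m, M]`,
`f t ≥ L t - (β/2) * ((M+m)*t - m*M - t^2)`, where `L` is the secant line through
`(m, f m)` and `(M, f M)`. -/
theorem secant_lower_bound_of_second_deriv_upper_bound
    (m M β : ℝ) (hmM : m < M) (f : ℝ → ℝ) (a b : ℝ)
    (hab : Set.Icc m M ⊆ Set.Ioo a b)
    (hf : ∀ x ∈ Set.Ioo a b, HasDerivAt f (deriv f x) x)
    (hf' : ∀ x ∈ Set.Ioo a b, HasDerivAt (deriv f) (deriv (deriv f) x) x)
    (hβ : ∀ x ∈ Set.Icc m M, deriv (deriv f) x ≤ β) :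
    ∀ t ∈ Set.Icc m M,
      ((M - t) / (M - m)) * f m + ((t - m) / (M - m)) * f M
          - (β / 2) * ((M + m) * t - m * M - t ^ 2) ≤ f t := by
  intro t ht
  have hconcave := concaveOn_sub_mul_sq_of_deriv2_le (convex_Icc m M)
    (fun x hx ↦ hf x (hab hx)) (fun x hx ↦ hf' x (hab (interior_subset hx)))
    (fun x hx ↦ hβ x (interior_subset hx))
  have hsecant := hconcave.secant_le_of_mem_Icc hmM ht
  have hsecant_sq :
      (M - t) / (M - m) * m ^ 2 + (t - m) / (M - m) * M ^ 2 = (M + m) * t - m * M := by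
    field_simp [(sub_pos.2 hmM).ne']
    ring
  linear_combination hsecant + β / 2 * hsecant_sq
end

section
/- Let f be twice differentiable on [m,M] with α ≤ f'' ≤ β. Then for all t ∈ [m,M]: (α/2)(t-m)(M-t) ≤ L(t) - f(t) ≤ (β/2)(t-m)(M-t), where L(t) is the secant line through (m, f(m)) and (M, f(M)). -/
/-!
If `c ≤ f''`, then `f - (c/2) x²` is convex, so it lies below its secant on `[m, M]`.
The secant of `x²` exceeds `t²` by exactly `(t - m)(M - t)`, which gives the lower bound;
the upper bound is the lower bound for `-f` with `c = -β`.
-/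

open Set

theorem ConvexOn.le_secant {𝕜 : Type*} [Field 𝕜] [LinearOrder 𝕜] [IsStrictOrderedRing 𝕜]
    {s : Set 𝕜} {g : 𝕜 → 𝕜} (hg : ConvexOn 𝕜 s g) {m M t : 𝕜} (hm : m ∈ s) (hM : M ∈ s)
    (hmt : m ≤ t) (htM : t ≤ M) (hmM : m < M) :
    g t ≤ (M - t) / (M - m) * g m + (t - m) / (M - m) * g M := by
  have hMm : M - m ≠ 0 := (sub_pos.2 hmM).ne'
  have hcomb : (M - t) / (M - m) * m + (t - m) / (M - m) * M = t := by field_simp; ring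
  simpa only [smul_eq_mul, hcomb] using
    hg.2 hm hM (div_nonneg (sub_nonneg.2 htM) (sub_pos.2 hmM).le)
      (div_nonneg (sub_nonneg.2 hmt) (sub_pos.2 hmM).le) (by field_simp; ring)

theorem secant_sq_sub_sq {𝕜 : Type*} [Field 𝕜] {m M : 𝕜} (hmM : m ≠ M) (t : 𝕜) :
    (M - t) / (M - m) * m ^ 2 + (t - m) / (M - m) * M ^ 2 - t ^ 2 = (t - m) * (M - t) := by
  have hMm : M - m ≠ 0 := sub_ne_zero.2 hmM.symm
  field_simp
  ring

theorem convexOn_sub_half_mul_sq_of_le_second_deriv {s : Set ℝ} (hs : Convex ℝ s)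
    {f f' f'' : ℝ → ℝ} {c : ℝ} (hf : ∀ x ∈ s, HasDerivWithinAt f (f' x) s x)
    (hf' : ∀ x ∈ s, HasDerivWithinAt f' (f'' x) s x) (hc : ∀ x ∈ s, c ≤ f'' x) :
    ConvexOn ℝ s (fun x => f x - c / 2 * x ^ 2) := by
  refine convexOn_of_hasDerivWithinAt2_nonneg hs (f' := fun x => f' x - c * x)
    (f'' := fun x => f'' x - c)
    (ContinuousOn.sub (fun x hx => (hf x hx).continuousWithinAt) (by fun_prop)) (fun x hx => ?_)
    (fun x hx => ?_) (fun x hx => sub_nonneg.2 (hc x (interior_subset hx)))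
  · have hsq : HasDerivWithinAt (fun x : ℝ => c / 2 * x ^ 2) (c * x) (interior s) x := by
      refine ((hasDerivAt_pow 2 x).const_mul (c / 2)).hasDerivWithinAt.congr_deriv ?_
      norm_num
      ring
    exact ((hf x (interior_subset hx)).mono interior_subset).sub hsq
  · exact ((hf' x (interior_subset hx)).mono interior_subset).sub
      (((hasDerivAt_id x).const_mul c).hasDerivWithinAt.congr_deriv (mul_one c))

theorem half_mul_le_secant_sub_of_le_second_deriv {s : Set ℝ} (hs : Convex ℝ s)
    {f f' f'' : ℝ → ℝ} {c : ℝ} (hf : ∀ x ∈ s, HasDerivWithinAt f (f' x) s x)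
    (hf' : ∀ x ∈ s, HasDerivWithinAt f' (f'' x) s x) (hc : ∀ x ∈ s, c ≤ f'' x)
    {m M t : ℝ} (hm : m ∈ s) (hM : M ∈ s) (hmt : m ≤ t) (htM : t ≤ M) (hmM : m < M) :
    c / 2 * (t - m) * (M - t) ≤ (M - t) / (M - m) * f m + (t - m) / (M - m) * f M - f t := by
  have hsecant := (convexOn_sub_half_mul_sq_of_le_second_deriv hs hf hf' hc).le_secant
    hm hM hmt htM hmM
  have hsq := secant_sq_sub_sq hmM.ne t
  linear_combination hsecant - c / 2 * hsq

/-- Let `f` be twice differentiable on `[m, M]` with `α ≤ f'' ≤ β` there.  Then for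
all `t ∈ [m, M]`, `(α/2)(t-m)(M-t) ≤ L t - f t ≤ (β/2)(t-m)(M-t)` where `L` is the
secant line through `(m, f m)` and `(M, f M)`. -/
theorem secant_error_bounds_of_second_deriv_bounds
    (m M α β : ℝ) (hmM : m < M) (f : ℝ → ℝ)
    (hf : ∀ x ∈ Set.Icc m M, HasDerivWithinAt f (derivWithin f (Set.Icc m M) x) (Set.Icc m M) x)
    (hf' : ∀ x ∈ Set.Icc m M, HasDerivWithinAt (derivWithin f (Set.Icc m M))
      (derivWithin (derivWithin f (Set.Icc m M)) (Set.Icc m M) x) (Set.Icc m M) x)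
    (hαβ : ∀ x ∈ Set.Icc m M,
      α ≤ derivWithin (derivWithin f (Set.Icc m M)) (Set.Icc m M) x ∧
        derivWithin (derivWithin f (Set.Icc m M)) (Set.Icc m M) x ≤ β) :
    ∀ t ∈ Set.Icc m M,
      (α / 2) * (t - m) * (M - t)
          ≤ (((M - t) / (M - m)) * f m + ((t - m) / (M - m)) * f M) - f t ∧
      (((M - t) / (M - m)) * f m + ((t - m) / (M - m)) * f M) - f t
          ≤ (β / 2) * (t - m) * (M - t) := by
  rintro t ⟨hmt, htM⟩
  have hm : m ∈ Icc m M := left_mem_Icc.2 hmM.le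
  have hM : M ∈ Icc m M := right_mem_Icc.2 hmM.le
  refine ⟨half_mul_le_secant_sub_of_le_second_deriv (convex_Icc m M) hf hf'
    (fun x hx => (hαβ x hx).1) hm hM hmt htM hmM, ?_⟩
  have hneg := half_mul_le_secant_sub_of_le_second_deriv (convex_Icc m M) (c := -β)
    (fun x hx => (hf x hx).neg) (fun x hx => (hf' x hx).neg)
    (fun x hx => neg_le_neg (hαβ x hx).2) hm hM hmt htM hmM
  simp only [Pi.neg_apply] at hneg
  linear_combination hneg
end

section
/- Scalar C-D-J bound via probability measure: let μ be a probability measure on [m,M], f twice differentiable with α ≤ f'' ≤ β on [m,M], and let E[X] = ∫t dμ, E[f(X)] = ∫f dμ, E[X²] = ∫t² dμ. Then f(E[X]) ≤ E[f(X)] + ((β-α)/2)·((M+m)E[X] - Mm) + (1/2)·(α·E[X]² - β·E[X²]). -/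
open MeasureTheory

/-!
Since `f'' ≥ α` on `[m, M]`, the function `g x = f x - α/2 x²` is convex there, and Jensen's
inequality for `g` reads `f (E[X]) ≤ E[f X] + (α/2) (E[X]² - E[X²])`. The remaining gap to the
claimed bound is `((β - α)/2) E[(M - X)(X - m)]`, which is nonnegative because `X ∈ [m, M]`
almost surely and `α ≤ β`.
-/

theorem ContinuousOn.integrable_of_ae_mem_compact {X E : Type*} [TopologicalSpace X]
    [T2Space X] [MeasurableSpace X] [OpensMeasurableSpace X] [NormedAddCommGroup E]
    {μ : Measure X} [IsFiniteMeasureOnCompacts μ] {K : Set X} {g : X → E}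
    (hK : IsCompact K) (hμK : ∀ᵐ x ∂μ, x ∈ K) (hg : ContinuousOn g K) : Integrable g μ := by
  simpa only [IntegrableOn, Measure.restrict_eq_self_of_ae_mem hμK] using
    hg.integrableOn_compact (μ := μ) hK

theorem integral_sq_le_of_ae_mem_Icc {m M : ℝ} {μ : Measure ℝ} [IsProbabilityMeasure μ]
    (hμ : ∀ᵐ t ∂μ, t ∈ Set.Icc m M) :
    ∫ t, t ^ 2 ∂μ ≤ (M + m) * (∫ t, t ∂μ) - M * m := by
  have hint : ∀ g : ℝ → ℝ, Continuous g → Integrable g μ := fun g hg =>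
    hg.continuousOn.integrable_of_ae_mem_compact isCompact_Icc hμ
  calc ∫ t, t ^ 2 ∂μ
      ≤ ∫ t, ((M + m) * t - M * m) ∂μ :=
        integral_mono_ae (hint _ (by fun_prop)) (hint _ (by fun_prop)) <|
          hμ.mono fun t ht => by nlinarith [ht.1, ht.2]
    _ = (M + m) * (∫ t, t ∂μ) - M * m := by
        rw [integral_sub (hint _ (by fun_prop)) (integrable_const _), integral_const_mul,
          integral_const, probReal_univ, one_smul]

theorem convexOn_sub_half_mul_sq {D : Set ℝ} (hD : Convex ℝ D) {f f' f'' : ℝ → ℝ} {α : ℝ}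
    (hf : ∀ x, HasDerivAt f (f' x) x) (hf' : ∀ x, HasDerivAt f' (f'' x) x)
    (hα : ∀ x ∈ D, α ≤ f'' x) : ConvexOn ℝ D (fun x => f x - α / 2 * x ^ 2) := by
  have hg' : ∀ x, HasDerivAt (fun x => f x - α / 2 * x ^ 2) (f' x - α * x) x := fun x =>
    (hf x).sub (((hasDerivAt_pow 2 x).const_mul (α / 2)).congr_deriv (by ring))
  have hg'' : ∀ x, HasDerivAt (fun x => f' x - α * x) (f'' x - α) x := fun x =>
    (hf' x).sub (((hasDerivAt_id x).const_mul α).congr_deriv (mul_one α))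
  refine convexOn_of_hasDerivWithinAt2_nonneg hD
    (fun x _ => (hg' x).continuousAt.continuousWithinAt)
    (fun x _ => (hg' x).hasDerivWithinAt) (fun x _ => (hg'' x).hasDerivWithinAt) ?_
  intro x hx
  linarith [hα x (interior_subset hx)]

theorem scalar_CDJ_bound_general (m M α β : ℝ)
    (μ : Measure ℝ) [IsProbabilityMeasure μ] (hsupp : μ (Set.Icc m M)ᶜ = 0)
    (f : ℝ → ℝ)
    (hf : ∀ x, HasDerivAt f (deriv f x) x)
    (hf' : ∀ x, HasDerivAt (deriv f) (deriv (deriv f) x) x)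
    (hαβ : ∀ x ∈ Set.Icc m M,
      α ≤ deriv (deriv f) x ∧ deriv (deriv f) x ≤ β) :
    f (∫ t, t ∂μ)
      ≤ (∫ t, f t ∂μ) + ((β - α) / 2) * ((M + m) * (∫ t, t ∂μ) - M * m)
          + (1 / 2) * (α * (∫ t, t ∂μ) ^ 2 - β * (∫ t, t ^ 2 ∂μ)) := by
  have hμ : ∀ᵐ t ∂μ, t ∈ Set.Icc m M := ae_iff.2 hsupp
  have hint : ∀ g : ℝ → ℝ, Continuous g → Integrable g μ := fun g hg =>
    hg.continuousOn.integrable_of_ae_mem_compact isCompact_Icc hμ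
  have hfc : Continuous f := continuous_iff_continuousAt.2 fun x => (hf x).continuousAt
  have hαβ_le : α ≤ β := by
    obtain ⟨x, hx⟩ := hμ.exists
    exact (hαβ x hx).1.trans (hαβ x hx).2
  have hconv := convexOn_sub_half_mul_sq (convex_Icc m M) hf hf' fun x hx => (hαβ x hx).1
  have hjensen := hconv.map_integral_le (by fun_prop) isClosed_Icc hμ
    (hint _ continuous_id) (hint _ (by fun_prop))
  rw [integral_sub (hint f hfc) (hint _ (by fun_prop)), integral_const_mul] at hjensen
  nlinarith [mul_le_mul_of_nonneg_left (integral_sq_le_of_ae_mem_Icc hμ)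
    (by linarith : (0 : ℝ) ≤ (β - α) / 2)]

/-- Scalar Choi-Davis-Jensen bound via a probability measure supported in `[m, M]`:
`f (E[X]) ≤ E[f X] + ((β-α)/2) * ((M+m) E[X] - M m) + (1/2) * (α E[X]^2 - β E[X^2])`. -/
theorem scalar_CDJ_bound (m M α β : ℝ) (hmM : m < M)
    (μ : Measure ℝ) [IsProbabilityMeasure μ] (hsupp : μ (Set.Icc m M)ᶜ = 0)
    (f : ℝ → ℝ)
    (hf : ∀ x, HasDerivAt f (deriv f x) x)
    (hf' : ∀ x, HasDerivAt (deriv f) (deriv (deriv f) x) x)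
    (hαβ : ∀ x ∈ Set.Icc m M,
      α ≤ deriv (deriv f) x ∧ deriv (deriv f) x ≤ β) :
    f (∫ t, t ∂μ)
      ≤ (∫ t, f t ∂μ) + ((β - α) / 2) * ((M + m) * (∫ t, t ∂μ) - M * m)
          + (1 / 2) * (α * (∫ t, t ∂μ) ^ 2 - β * (∫ t, t ^ 2 ∂μ)) :=
  scalar_CDJ_bound_general m M α β μ hsupp f hf hf' hαβ
end

section
/- Scalar converse C-D-J bound via probability measure: under the same hypotheses, E[f(X)] ≤ f(E[X]) + ((β-α)/2)·((M+m)E[X] - Mm) + (1/2)·(α·E[X²] - β·E[X]²). -/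
open MeasureTheory Set

/-! Write `f = g + α t²/2 = β t²/2 - ψ` with `g` and `ψ` convex on `[m, M]`. A convex function lies
below its chord on `[m, M]`, and the chord is affine, so `E[g(X)]` is at most the chord of `g`
evaluated at `E[X]`, while `ψ(E[X])` is at most the chord of `ψ` there. The two chords add up to the
chord of `(β - α) t²/2`, which is `(β - α)((M + m) t - M m)/2`; adding the two inequalities gives
the bound. -/

noncomputable def chord (g : ℝ → ℝ) (a b x : ℝ) : ℝ :=
  ((b - x) * g a + (x - a) * g b) / (b - a)

lemma chord_add (g h : ℝ → ℝ) (a b x : ℝ) :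
    chord (fun t ↦ g t + h t) a b x = chord g a b x + chord h a b x := by
  unfold chord
  ring

lemma chord_const_mul_sq {a b : ℝ} (hab : a ≠ b) (c x : ℝ) :
    chord (fun t ↦ c * t ^ 2) a b x = c * ((a + b) * x - a * b) := by
  unfold chord
  field_simp [sub_ne_zero.2 hab.symm]
  ring

lemma integral_chord {μ : Measure ℝ} [IsProbabilityMeasure μ]
    (hid : Integrable (fun t : ℝ ↦ t) μ) (g : ℝ → ℝ) (a b : ℝ) :
    ∫ t, chord g a b t ∂μ = chord g a b (∫ t, t ∂μ) := by
  have haffine : ∀ t, chord g a b t = (b * g a - a * g b + t * (g b - g a)) / (b - a) := by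
    intro t
    unfold chord
    ring
  simp only [haffine, integral_div, integral_add (integrable_const _) (hid.mul_const _),
    integral_mul_const, integral_const, probReal_univ, one_smul]

lemma ConvexOn.le_chord {g : ℝ → ℝ} {a b x : ℝ} (hg : ConvexOn ℝ (Icc a b) g) (hab : a < b)
    (hx : x ∈ Icc a b) : g x ≤ chord g a b x := by
  have hba : 0 < b - a := sub_pos.2 hab
  have key := hg.2 (left_mem_Icc.2 hab.le) (right_mem_Icc.2 hab.le)
    (div_nonneg (sub_nonneg.2 hx.2) hba.le) (div_nonneg (sub_nonneg.2 hx.1) hba.le)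
    (by field_simp; ring)
  have hx' : ((b - x) / (b - a)) • a + ((x - a) / (b - a)) • b = x := by
    simp only [smul_eq_mul]
    field_simp
    ring
  rw [hx'] at key
  simpa only [chord, smul_eq_mul, add_div, mul_div_right_comm] using key

lemma ContinuousOn.integrable_of_ae_mem {μ : Measure ℝ} [IsFiniteMeasure μ] {s : Set ℝ}
    {g : ℝ → ℝ} (hg : ContinuousOn g s) (hs : IsCompact s) (hμ : ∀ᵐ t ∂μ, t ∈ s) :
    Integrable g μ := by
  rw [← Measure.restrict_eq_self_of_ae_mem hμ]
  exact hg.integrableOn_compact hs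

theorem ConvexOn.integral_le_chord {μ : Measure ℝ} [IsProbabilityMeasure μ] {g : ℝ → ℝ}
    {a b : ℝ} (hg : ConvexOn ℝ (Icc a b) g) (hab : a < b) (hμ : ∀ᵐ t ∂μ, t ∈ Icc a b)
    (hgi : Integrable g μ) : ∫ t, g t ∂μ ≤ chord g a b (∫ t, t ∂μ) := by
  rw [← integral_chord (continuousOn_id.integrable_of_ae_mem isCompact_Icc hμ)]
  exact integral_mono_ae hgi
    ((by unfold chord; fun_prop : Continuous (chord g a b)).continuousOn.integrable_of_ae_mem
      isCompact_Icc hμ)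
    (hμ.mono fun t ht ↦ hg.le_chord hab ht)

lemma convexOn_sub_mul_sq_of_le_deriv2 {s : Set ℝ} (hs : Convex ℝ s) {f f' f'' : ℝ → ℝ} {α : ℝ}
    (hf : ∀ x, HasDerivAt f (f' x) x) (hf' : ∀ x, HasDerivAt f' (f'' x) x)
    (hα : ∀ x ∈ s, α ≤ f'' x) : ConvexOn ℝ s (fun x ↦ f x - α / 2 * x ^ 2) := by
  refine convexOn_of_hasDerivWithinAt2_nonneg hs (f' := fun x ↦ f' x - α * x)
    (f'' := fun x ↦ f'' x - α) ?_ (fun x _ ↦ ?_) (fun x _ ↦ ?_) (fun x hx ↦ ?_)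
  · exact fun x _ ↦ ((hf x).continuousAt.sub (by fun_prop)).continuousWithinAt
  · exact ((hf x).sub ((hasDerivAt_pow 2 x).const_mul (α / 2))).hasDerivWithinAt.congr_deriv
      (by ring)
  · exact ((hf' x).sub ((hasDerivAt_id x).const_mul α)).hasDerivWithinAt.congr_deriv (by ring)
  · exact sub_nonneg.2 (hα x (interior_subset hx))

/-- Scalar converse Choi-Davis-Jensen bound via a probability measure supported in
`[m, M]`:
`E[f X] ≤ f (E[X]) + ((β-α)/2) * ((M+m) E[X] - M m) + (1/2) * (α E[X^2] - β E[X]^2)`. -/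
theorem scalar_converse_CDJ_bound (m M α β : ℝ) (hmM : m < M)
    (μ : Measure ℝ) [IsProbabilityMeasure μ] (hsupp : μ (Set.Icc m M)ᶜ = 0)
    (f : ℝ → ℝ)
    (hf : ∀ x, HasDerivAt f (deriv f x) x)
    (hf' : ∀ x, HasDerivAt (deriv f) (deriv (deriv f) x) x)
    (hαβ : ∀ x ∈ Set.Icc m M,
      α ≤ deriv (deriv f) x ∧ deriv (deriv f) x ≤ β) :
    (∫ t, f t ∂μ)
      ≤ f (∫ t, t ∂μ) + ((β - α) / 2) * ((M + m) * (∫ t, t ∂μ) - M * m)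
          + (1 / 2) * (α * (∫ t, t ^ 2 ∂μ) - β * (∫ t, t ∂μ) ^ 2) := by
  have hμ : ∀ᵐ t ∂μ, t ∈ Icc m M := mem_ae_iff.2 hsupp
  have hint {g : ℝ → ℝ} (hg : Continuous g) : Integrable g μ :=
    hg.continuousOn.integrable_of_ae_mem isCompact_Icc hμ
  have hfc : Continuous f := continuous_iff_continuousAt.2 fun x ↦ (hf x).continuousAt
  have hE : ∫ t, t ∂μ ∈ Icc m M :=
    (convex_Icc m M).integral_mem isClosed_Icc hμ (hint continuous_id)
  have hlower := (convexOn_sub_mul_sq_of_le_deriv2 (convex_Icc m M) hf hf'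
    fun x hx ↦ (hαβ x hx).1).integral_le_chord hmM hμ (hint (by fun_prop))
  have hupper := (convexOn_sub_mul_sq_of_le_deriv2 (convex_Icc m M) (fun x ↦ (hf x).neg)
    (fun x ↦ (hf' x).neg) fun x hx ↦ neg_le_neg (hαβ x hx).2).le_chord hmM hE
  simp only [Pi.neg_apply] at hupper
  have hsum :=
    chord_add (fun t ↦ f t - α / 2 * t ^ 2) (fun t ↦ -f t - -β / 2 * t ^ 2) m M (∫ t, t ∂μ)
  rw [show (fun t ↦ f t - α / 2 * t ^ 2 + (-f t - -β / 2 * t ^ 2)) = fun t ↦ (β - α) / 2 * t ^ 2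
    from funext fun t ↦ by ring, chord_const_mul_sq hmM.ne] at hsum
  rw [integral_sub (hint hfc) ((hint (by fun_prop)).const_mul _), integral_const_mul] at hlower
  linarith
end

section
/- For a positive definite n×n complex matrix A with all eigenvalues in [m,M] (0 < m < M) and a unit vector x, the inequality ⟨A⁻¹x, x⟩ ≤ ((M+m)²/(4Mm))·⟨Ax, x⟩⁻¹ - ((M+m)⟨Ax,x⟩ - Mm - ⟨A²x,x⟩)/M³ holds, improving the Kantorovich inequality. -/
/-!
Diagonalising `A`, the three quadratic forms become averages of `λ⁻¹`, `λ` and `λ²` over the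
eigenvalues `λ ∈ [m, M]`, weighted by the squared coordinates of `x` in an eigenbasis. On
`[m, M]` the function `λ⁻¹` lies below its secant `(M + m - λ) / (M m)` by at least
`(λ - m)(M - λ) / M³`; averaging this pointwise bound and then estimating the averaged secant
`(M + m - a) / (M m)` by `(M + m)² / (4 M m a)` (AM-GM) gives the inequality.
-/

open Matrix ComplexOrder

theorem inv_le_secant_sub_of_mem_Icc {m M l : ℝ} (hm : 0 < m) (hl : l ∈ Set.Icc m M) :
    l⁻¹ ≤ (M + m - l) / (M * m) - (l - m) * (M - l) / M ^ 3 := by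
  obtain ⟨hml, hlM⟩ := hl
  have hl : 0 < l := hm.trans_le hml
  have hM : 0 < M := hl.trans_le hlM
  have hgap : (M + m - l) / (M * m) - (l - m) * (M - l) / M ^ 3 - l⁻¹
      = (l - m) * (M - l) * (M ^ 2 - m * l) / (M ^ 3 * m * l) := by
    field_simp
    ring
  have hml_le : m * l ≤ M ^ 2 := by nlinarith
  rw [← sub_nonneg, hgap]
  apply div_nonneg _ (by positivity)
  exact mul_nonneg (mul_nonneg (sub_nonneg.2 hml) (sub_nonneg.2 hlM)) (sub_nonneg.2 hml_le)

theorem secant_le_kantorovich_mul_inv {m M a : ℝ} (hm : 0 < m) (hM : 0 < M) (ha : 0 < a) :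
    (M + m - a) / (M * m) ≤ (M + m) ^ 2 / (4 * M * m) * a⁻¹ := by
  have hgap : (M + m) ^ 2 / (4 * M * m) * a⁻¹ - (M + m - a) / (M * m)
      = (M + m - 2 * a) ^ 2 / (4 * M * m * a) := by
    field_simp
    ring
  rw [← sub_nonneg, hgap]
  positivity

theorem Finset.sum_inv_mul_le_improved_kantorovich {ι : Type*} (s : Finset ι) {w l : ι → ℝ}
    {m M : ℝ} (hm : 0 < m) (hmM : m ≤ M) (hw : ∀ i ∈ s, 0 ≤ w i) (hw1 : ∑ i ∈ s, w i = 1)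
    (hl : ∀ i ∈ s, l i ∈ Set.Icc m M) :
    ∑ i ∈ s, (l i)⁻¹ * w i
      ≤ (M + m) ^ 2 / (4 * M * m) * (∑ i ∈ s, l i * w i)⁻¹
        - ((M + m) * ∑ i ∈ s, l i * w i - M * m - ∑ i ∈ s, l i ^ 2 * w i) / M ^ 3 := by
  set a := ∑ i ∈ s, l i * w i
  have hma : m ≤ a := calc
    m = ∑ i ∈ s, m * w i := by rw [← Finset.mul_sum, hw1, mul_one]
    _ ≤ a := Finset.sum_le_sum fun i hi ↦ mul_le_mul_of_nonneg_right (hl i hi).1 (hw i hi)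
  have hsecant : ∑ i ∈ s, ((M + m - l i) / (M * m) - (l i - m) * (M - l i) / M ^ 3) * w i
      = (M + m - a) / (M * m) - ((M + m) * a - M * m - ∑ i ∈ s, l i ^ 2 * w i) / M ^ 3 := by
    have hexpand : ∀ i, ((M + m - l i) / (M * m) - (l i - m) * (M - l i) / M ^ 3) * w i
        = ((M + m) / (M * m) + M * m / M ^ 3) * w i
          - (1 / (M * m) + (M + m) / M ^ 3) * (l i * w i) + 1 / M ^ 3 * (l i ^ 2 * w i) := by
      intro i
      ring
    simp only [hexpand, Finset.sum_add_distrib, Finset.sum_sub_distrib, ← Finset.mul_sum, hw1]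
    ring
  calc ∑ i ∈ s, (l i)⁻¹ * w i
      ≤ ∑ i ∈ s, ((M + m - l i) / (M * m) - (l i - m) * (M - l i) / M ^ 3) * w i :=
        Finset.sum_le_sum fun i hi ↦
          mul_le_mul_of_nonneg_right (inv_le_secant_sub_of_mem_Icc hm (hl i hi)) (hw i hi)
    _ ≤ _ := by
        rw [hsecant]
        gcongr ?_ - _
        exact secant_le_kantorovich_mul_inv hm (hm.trans_le hmM) (hm.trans_le hma)

theorem Matrix.star_dotProduct_diagonal_mulVec {𝕜 n : Type*} [RCLike 𝕜] [Fintype n]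
    [DecidableEq n] (d : n → ℝ) (y : n → 𝕜) :
    star y ⬝ᵥ (diagonal (RCLike.ofReal ∘ d) *ᵥ y) = ∑ i, ((d i * ‖y i‖ ^ 2 : ℝ) : 𝕜) := by
  refine Finset.sum_congr rfl fun i _ ↦ ?_
  simp only [mulVec_diagonal, Pi.star_apply, Function.comp_apply, RCLike.star_def]
  push_cast
  rw [← RCLike.conj_mul]
  ring

theorem Matrix.IsHermitian.star_dotProduct_cfc_mulVec {𝕜 n : Type*} [RCLike 𝕜] [Fintype n]
    [DecidableEq n] {A : Matrix n n 𝕜} (hA : A.IsHermitian) (f : ℝ → ℝ) (x : n → 𝕜) :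
    star x ⬝ᵥ (cfc f A *ᵥ x) = ∑ i, ((f (hA.eigenvalues i) *
      ‖(star (hA.eigenvectorUnitary : Matrix n n 𝕜) *ᵥ x) i‖ ^ 2 : ℝ) : 𝕜) := by
  rw [hA.cfc_eq, IsHermitian.cfc, Unitary.conjStarAlgAut_apply, ← mulVec_mulVec, ← mulVec_mulVec,
    dotProduct_mulVec]
  have hU : star x ᵥ* (hA.eigenvectorUnitary : Matrix n n 𝕜)
      = star (star (hA.eigenvectorUnitary : Matrix n n 𝕜) *ᵥ x) := by
    rw [star_mulVec, star_eq_conjTranspose, conjTranspose_conjTranspose]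
  rw [hU]
  exact star_dotProduct_diagonal_mulVec _ _

/-- Improved Kantorovich inequality: for a positive definite matrix `A` with all
eigenvalues in `[m, M]` (`0 < m < M`) and a unit vector `x`,
`⟨A⁻¹ x, x⟩ ≤ ((M+m)^2/(4 M m)) ⟨A x, x⟩⁻¹ - ((M+m)⟨A x,x⟩ - M m - ⟨A² x,x⟩)/M³`. -/
theorem improved_kantorovich {n : ℕ} (A : Matrix (Fin n) (Fin n) ℂ)
    (hA : A.PosDef) (m M : ℝ) (hm : 0 < m) (hmM : m < M)
    (heig : ∀ i, hA.isHermitian.eigenvalues i ∈ Set.Icc m M)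
    (x : Fin n → ℂ) (hx : star x ⬝ᵥ x = 1) :
    (star x ⬝ᵥ (A⁻¹ *ᵥ x)).re
      ≤ (M + m) ^ 2 / (4 * M * m) * ((star x ⬝ᵥ (A *ᵥ x)).re)⁻¹
          - ((M + m) * (star x ⬝ᵥ (A *ᵥ x)).re - M * m
              - (star x ⬝ᵥ ((A ^ 2) *ᵥ x)).re) / M ^ 3 := by
  set w : Fin n → ℝ :=
    fun i ↦ ‖(star (hA.isHermitian.eigenvectorUnitary : Matrix (Fin n) (Fin n) ℂ) *ᵥ x) i‖ ^ 2
  have hsa : IsSelfAdjoint A := hA.isHermitian.isSelfAdjoint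
  have hquad (f : ℝ → ℝ) :
      (star x ⬝ᵥ (cfc f A *ᵥ x)).re = ∑ i, f (hA.isHermitian.eigenvalues i) * w i := by
    rw [hA.isHermitian.star_dotProduct_cfc_mulVec, Complex.re_sum]
    rfl
  have hw1 : ∑ i, w i = 1 := by
    simpa [cfc_one ℝ A hsa, hx] using (hquad 1).symm
  have hA1 := hquad id
  rw [cfc_id ℝ A hsa] at hA1
  have hA2 := hquad (· ^ 2)
  rw [cfc_pow_id A 2 hsa] at hA2
  have hAinv := hquad (·⁻¹)
  rw [cfc_ringInverse_id (R := ℝ) A hA.isUnit hsa, ← nonsing_inv_eq_ringInverse] at hAinv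
  rw [hA1, hA2, hAinv]
  exact Finset.univ.sum_inv_mul_le_improved_kantorovich hm hmM.le (fun i _ ↦ sq_nonneg _) hw1
    fun i _ ↦ heig i
end

section
/- Kantorovich inequality for unit vectors: for a positive definite matrix A with spectrum in [m,M], 0 < m < M, and unit vector x, ⟨A⁻¹x, x⟩ ≤ ((M+m)²/(4Mm))·⟨Ax, x⟩⁻¹. -/
open Matrix ComplexOrder

/-!
Diagonalizing `A = U diag(λ) U*` turns `⟨A x, x⟩` and `⟨A⁻¹ x, x⟩` into the averages `T = ∑ wᵢ λᵢ`
and `S = ∑ wᵢ λᵢ⁻¹` for the weights `wᵢ = |(U* x)ᵢ|²`, which sum to `‖x‖² = 1`. For `λ ∈ [m, M]`,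
`(M - λ)(λ - m) ≥ 0` reads `M m λ⁻¹ + λ ≤ M + m`; averaging gives `M m S ≤ M + m - T`, and
`(M + m - T) T ≤ (M + m)² / 4` finishes.
-/

theorem mul_mul_inv_add_le_add {m M t : ℝ} (hm : 0 < m) (ht : t ∈ Set.Icc m M) :
    M * m * t⁻¹ + t ≤ M + m := by
  obtain ⟨hmt, htM⟩ := ht
  rw [← le_sub_iff_add_le, mul_inv_le_iff₀ (hm.trans_le hmt)]
  nlinarith [mul_nonneg (sub_nonneg.2 hmt) (sub_nonneg.2 htM)]

theorem Finset.kantorovich_inequality {ι : Type*} {s : Finset ι} {w f : ι → ℝ} {m M : ℝ}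
    (hm : 0 < m) (hw : ∀ i ∈ s, 0 ≤ w i) (hw1 : ∑ i ∈ s, w i = 1)
    (hf : ∀ i ∈ s, f i ∈ Set.Icc m M) :
    ∑ i ∈ s, w i * (f i)⁻¹ ≤ (M + m) ^ 2 / (4 * M * m) * (∑ i ∈ s, w i * f i)⁻¹ := by
  set S := ∑ i ∈ s, w i * (f i)⁻¹
  set T := ∑ i ∈ s, w i * f i
  obtain ⟨hmT, hTM⟩ : T ∈ Set.Icc m M := by
    simpa only [smul_eq_mul] using (convex_Icc m M).sum_mem hw hw1 hf
  have hS : M * m * S + T ≤ M + m :=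
    calc M * m * S + T = ∑ i ∈ s, w i * (M * m * (f i)⁻¹ + f i) := by
          simp only [S, T, Finset.mul_sum, ← Finset.sum_add_distrib]
          exact Finset.sum_congr rfl fun i _ => by ring
      _ ≤ ∑ i ∈ s, w i * (M + m) :=
          Finset.sum_le_sum fun i hi =>
            mul_le_mul_of_nonneg_left (mul_mul_inv_add_le_add hm (hf i hi)) (hw i hi)
      _ = M + m := by rw [← Finset.sum_mul, hw1, one_mul]
  have hT : 0 < T := hm.trans_le hmT
  have hM : 0 < M := hT.trans_le hTM
  rw [div_mul_eq_mul_div, le_div_iff₀ (by positivity), le_mul_inv_iff₀ hT]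
  nlinarith [sq_nonneg (M + m - 2 * T)]

namespace Matrix

open Unitary

variable {ι 𝕜 : Type*} [Fintype ι] [DecidableEq ι] [RCLike 𝕜]

theorem star_dotProduct_conjStarAlgAut_diagonal_mulVec (U : unitary (Matrix ι ι 𝕜))
    (d : ι → ℝ) (x : ι → 𝕜) :
    star x ⬝ᵥ (conjStarAlgAut 𝕜 _ U (diagonal (RCLike.ofReal ∘ d)) *ᵥ x)
      = ((∑ i, ‖(star (U : Matrix ι ι 𝕜) *ᵥ x) i‖ ^ 2 * d i : ℝ) : 𝕜) := by
  have hstar : star x ᵥ* (U : Matrix ι ι 𝕜) = star (star (U : Matrix ι ι 𝕜) *ᵥ x) := by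
    rw [star_mulVec, ← star_eq_conjTranspose, star_star]
  rw [conjStarAlgAut_apply, ← mulVec_mulVec, ← mulVec_mulVec, dotProduct_mulVec, hstar]
  simp only [dotProduct, mulVec_diagonal, Pi.star_apply, RCLike.star_def, Function.comp_apply,
    RCLike.ofReal_sum, RCLike.ofReal_mul, RCLike.ofReal_pow]
  refine Finset.sum_congr rfl fun i _ => ?_
  rw [← RCLike.conj_mul]
  ring

theorem IsHermitian.inv_eq_conjStarAlgAut {A : Matrix ι ι 𝕜} (hA : A.IsHermitian)
    (h : ∀ i, hA.eigenvalues i ≠ 0) :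
    A⁻¹ = conjStarAlgAut 𝕜 _ hA.eigenvectorUnitary
      (diagonal (RCLike.ofReal ∘ hA.eigenvalues⁻¹)) := by
  refine inv_eq_right_inv ?_
  refine (congrArg (· * _) hA.spectral_theorem).trans ?_
  rw [← map_mul, diagonal_mul_diagonal, ← map_one (conjStarAlgAut 𝕜 _ hA.eigenvectorUnitary),
    ← diagonal_one]
  congr 2
  funext i
  simp [h i]

end Matrix

/-- Kantorovich inequality: for a positive definite matrix `A` with all eigenvalues
in `[m, M]` (`0 < m < M`) and a unit vector `x`,
`⟨A⁻¹ x, x⟩ ≤ ((M+m)^2/(4 M m)) ⟨A x, x⟩⁻¹`. -/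
theorem kantorovich_inequality {n : ℕ} (A : Matrix (Fin n) (Fin n) ℂ)
    (hA : A.PosDef) (m M : ℝ) (hm : 0 < m)
    (heig : ∀ i, hA.isHermitian.eigenvalues i ∈ Set.Icc m M)
    (x : Fin n → ℂ) (hx : star x ⬝ᵥ x = 1) :
    (star x ⬝ᵥ (A⁻¹ *ᵥ x)).re
      ≤ (M + m) ^ 2 / (4 * M * m) * ((star x ⬝ᵥ (A *ᵥ x)).re)⁻¹ := by
  let U := hA.isHermitian.eigenvectorUnitary
  let w : Fin n → ℝ := fun i => ‖(star (U : Matrix (Fin n) (Fin n) ℂ) *ᵥ x) i‖ ^ 2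
  have hform (d : Fin n → ℝ) :
      (star x ⬝ᵥ (Unitary.conjStarAlgAut ℂ _ U (diagonal (RCLike.ofReal (K := ℂ) ∘ d)) *ᵥ x)).re
        = ∑ i, w i * d i := by
    rw [star_dotProduct_conjStarAlgAut_diagonal_mulVec]
    exact RCLike.ofReal_re (K := ℂ) _
  have hw1 : ∑ i, w i = 1 := by simpa [hx, eq_comm] using hform 1
  have hT : (star x ⬝ᵥ (A *ᵥ x)).re = ∑ i, w i * hA.isHermitian.eigenvalues i := by
    rw [← hform, ← hA.isHermitian.spectral_theorem]
  have hS : (star x ⬝ᵥ (A⁻¹ *ᵥ x)).re = ∑ i, w i * (hA.isHermitian.eigenvalues i)⁻¹ := by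
    rw [hA.isHermitian.inv_eq_conjStarAlgAut fun i => (hA.eigenvalues_pos i).ne', hform]
    rfl
  rw [hS, hT]
  exact Finset.kantorovich_inequality hm (fun i _ => by positivity) hw1 fun i _ => heig i
end

section
/- For a power function with r ∈ (-∞,-1) ∪ (2,∞): for t ∈ [m,M], 0 < m < M, the scalar secant estimate t^r ≤ L(t) - (γ/2)(t-m)(M-t) holds, with γ = r(r-1)·min{m^{r-2}, M^{r-2}} and L(t) = ((M-t)m^r + (t-m)M^r)/(M-m). -/
/-- Secant estimate for power functions with `r < -1` or `r > 2`: for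
`t ∈ [m, M]` with `0 < m < M`,
`t^r ≤ L t - (γ/2)(t-m)(M-t)` where `γ = r(r-1) min (m^(r-2), M^(r-2))` and
`L t = ((M-t) m^r + (t-m) M^r)/(M-m)`. -/
theorem power_secant_estimate (m M r : ℝ) (hm : 0 < m) (hmM : m < M)
    (hr : r < -1 ∨ 2 < r) :
    ∀ t ∈ Set.Icc m M,
      t ^ r ≤ ((M - t) / (M - m)) * m ^ r + ((t - m) / (M - m)) * M ^ r
        - (r * (r - 1) * min (m ^ (r - 2)) (M ^ (r - 2)) / 2) * (t - m) * (M - t) := by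
  intro t ht
  obtain ⟨htm, htM⟩ := ht
  have hMm : (0:ℝ) < M - m := by linarith
  set γ : ℝ := r * (r - 1) * min (m ^ (r - 2)) (M ^ (r - 2)) with hγ
  set c : ℝ := γ / 2 with hc
  set h : ℝ → ℝ := fun t => t ^ r + c * ((t - m) * (M - t)) with hh
  have hrr : 0 < r * (r - 1) := by
    rcases hr with h1 | h1
    · have : r < 0 := by linarith
      nlinarith
    · nlinarith
  have hconv : ConvexOn ℝ (Set.Icc m M) h := by
    have hint : interior (Set.Icc m M) = Set.Ioo m M := interior_Icc
    apply convexOn_of_hasDerivWithinAt2_nonneg (convex_Icc m M)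
      (f' := fun x => r * x ^ (r - 1) + c * (m + M - 2 * x))
      (f'' := fun x => r * (r - 1) * x ^ (r - 2) - 2 * c)
    · -- continuity
      apply ContinuousOn.add
      · exact (continuousOn_id.rpow_const fun x hx => Or.inl (by
          have : 0 < x := lt_of_lt_of_le hm hx.1; exact ne_of_gt this))
      · fun_prop
    · intro x hx
      rw [hint] at hx
      have hx0 : x ≠ 0 := ne_of_gt (lt_trans hm hx.1)
      have h1 : HasDerivAt (fun t : ℝ => t ^ r) (r * x ^ (r - 1)) x :=
        Real.hasDerivAt_rpow_const (Or.inl hx0)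
      have h2 : HasDerivAt (fun t : ℝ => (t - m) * (M - t)) (m + M - 2 * x) x := by
        have : HasDerivAt (fun t : ℝ => (t - m) * (M - t)) (1 * (M - x) + (x - m) * (0 - 1)) x := ((hasDerivAt_id x).sub_const m).mul
          ((hasDerivAt_const x M).sub (hasDerivAt_id x))
        convert this using 1
        ring
      exact ((h1.add ((h2.const_mul c))).hasDerivWithinAt).congr_deriv (by ring)
    · intro x hx
      rw [hint] at hx
      have hx0 : x ≠ 0 := ne_of_gt (lt_trans hm hx.1)
      have h1 : HasDerivAt (fun t : ℝ => t ^ (r - 1)) ((r - 1) * x ^ (r - 1 - 1)) x :=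
        Real.hasDerivAt_rpow_const (Or.inl hx0)
      have h2 : HasDerivAt (fun t : ℝ => r * t ^ (r - 1) + c * (m + M - 2 * t))
          (r * ((r - 1) * x ^ (r - 1 - 1)) + c * (0 - 2 * 1)) x := by
        exact (h1.const_mul r).add
          (((hasDerivAt_const x (m + M)).sub ((hasDerivAt_id x).const_mul 2)).const_mul c)
      have : r - 1 - 1 = r - 2 := by ring
      rw [this] at h2
      exact h2.hasDerivWithinAt.congr_deriv (by ring)
    · intro x hx
      rw [hint] at hx
      have hx0 : 0 < x := lt_trans hm hx.1
      have hmin : min (m ^ (r - 2)) (M ^ (r - 2)) ≤ x ^ (r - 2) := by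
        rcases hr with h1 | h1
        · refine le_trans (min_le_right _ _) ?_
          exact Real.rpow_le_rpow_of_nonpos hx0 hx.2.le (by linarith)
        · refine le_trans (min_le_left _ _) ?_
          exact Real.rpow_le_rpow hm.le hx.1.le (by linarith)
      have : γ ≤ r * (r - 1) * x ^ (r - 2) := by
        rw [hγ]
        exact mul_le_mul_of_nonneg_left hmin hrr.le
      rw [hc]
      linarith
  -- apply convexity with weights
  set a : ℝ := (M - t) / (M - m) with ha
  set b : ℝ := (t - m) / (M - m) with hb
  have ha0 : 0 ≤ a := div_nonneg (by linarith) hMm.le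
  have hb0 : 0 ≤ b := div_nonneg (by linarith) hMm.le
  have hab : a + b = 1 := by
    rw [ha, hb, ← add_div, div_eq_one_iff_eq (ne_of_gt hMm)]
    ring
  have hmem_m : m ∈ Set.Icc m M := ⟨le_refl m, by linarith⟩
  have hmem_M : M ∈ Set.Icc m M := ⟨by linarith, le_refl M⟩
  have hkey := hconv.2 hmem_m hmem_M ha0 hb0 hab
  have hcomb : a • m + b • M = t := by
    rw [ha, hb, smul_eq_mul, smul_eq_mul]
    field_simp
    ring
  rw [hcomb] at hkey
  have hhm : h m = m ^ r := by simp [hh]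
  have hhM : h M = M ^ r := by simp [hh]
  rw [hhm, hhM] at hkey
  have hht : h t = t ^ r + c * ((t - m) * (M - t)) := rfl
  rw [hht] at hkey
  simp only [smul_eq_mul] at hkey
  rw [hc] at hkey ⊢
  linarith
end

section
/- Generalized Kantorovich constant bounds the secant line: for 0 < m < M and r ∈ (-∞,0)∪(1,∞), for all t ∈ [m,M], L(t) ≤ K(m,M,r)·t^r, where L(t) = ((M-t)m^r + (t-m)M^r)/(M-m) and K(m,M,r) = ((mM^r - Mm^r)/((r-1)(M-m)))·(((r-1)/r)·(M^r - m^r)/(mM^r - Mm^r))^r. -/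
/-!
With `a = (m M^r - M m^r) / (r - 1)` and `b = (M^r - m^r) / r`, both positive because `u ↦ u^s`
increases for `s > 0` and decreases for `s < 0`, the secant is `L t = (r b t - (r - 1) a) / (M - m)`
and `K t^r = a (b t / a)^r / (M - m)`. So the claim is that the convex function `u ↦ a (u / a)^r`
lies above its tangent line at `u = a`, which is Bernoulli's inequality `1 + r (x - 1) ≤ x^r`
at `x = b t / a`.
-/

open Real

lemma one_add_mul_sub_one_le_rpow {x r : ℝ} (hx : 0 < x) (hr : r ≤ 0 ∨ 1 ≤ r) :
    1 + r * (x - 1) ≤ x ^ r := by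
  rcases hr with hr | hr
  · calc 1 + r * (x - 1) ≤ r * log x + 1 := by nlinarith [log_le_sub_one_of_pos hx]
      _ ≤ exp (r * log x) := add_one_le_exp _
      _ = x ^ r := by rw [rpow_def_of_pos hx, mul_comm]
  · simpa using one_add_mul_self_le_rpow_one_add (by linarith : (-1 : ℝ) ≤ x - 1) hr

lemma rpow_sub_rpow_div_pos {x y s : ℝ} (hx : 0 < x) (hxy : x < y) (hs : s ≠ 0) :
    0 < (y ^ s - x ^ s) / s := by
  rcases hs.lt_or_gt with hs | hs
  · exact div_pos_of_neg_of_neg (sub_neg.2 (rpow_lt_rpow_of_neg hx hxy hs)) hs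
  · exact div_pos (sub_pos.2 (rpow_lt_rpow hx.le hxy hs)) hs

lemma mul_rpow_sub_mul_rpow_div_pos {x y s : ℝ} (hx : 0 < x) (hxy : x < y) (hs : s - 1 ≠ 0) :
    0 < (x * y ^ s - y * x ^ s) / (s - 1) := by
  have hy : 0 < y := hx.trans hxy
  have : (x * y ^ s - y * x ^ s) / (s - 1) = x * y * ((y ^ (s - 1) - x ^ (s - 1)) / (s - 1)) := by
    rw [rpow_sub_one hy.ne', rpow_sub_one hx.ne']
    field_simp
  rw [this]
  exact mul_pos (mul_pos hx hy) (rpow_sub_rpow_div_pos hx hxy hs)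

lemma mul_sub_le_mul_div_rpow {a u r : ℝ} (ha : 0 < a) (hu : 0 < u) (hr : r ≤ 0 ∨ 1 ≤ r) :
    r * u - (r - 1) * a ≤ a * (u / a) ^ r :=
  calc r * u - (r - 1) * a = a * (1 + r * (u / a - 1)) := by field_simp; ring
    _ ≤ a * (u / a) ^ r :=
      mul_le_mul_of_nonneg_left (one_add_mul_sub_one_le_rpow (div_pos hu ha) hr) ha.le

/-- The generalized Kantorovich constant bounds the secant line: for `0 < m < M`
and `r < 0` or `r > 1`, for all `t ∈ [m, M]`, `L t ≤ K(m, M, r) * t ^ r` with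
`L t = ((M-t) m^r + (t-m) M^r)/(M-m)` and
`K(m,M,r) = ((m M^r - M m^r)/((r-1)(M-m))) * (((r-1)/r) (M^r - m^r)/(m M^r - M m^r))^r`. -/
theorem kantorovich_constant_bounds_secant (m M r : ℝ) (hm : 0 < m) (hmM : m < M)
    (hr : r < 0 ∨ 1 < r) :
    ∀ t ∈ Set.Icc m M,
      ((M - t) / (M - m)) * m ^ r + ((t - m) / (M - m)) * M ^ r
        ≤ ((m * M ^ r - M * m ^ r) / ((r - 1) * (M - m)))
            * (((r - 1) / r) * (M ^ r - m ^ r) / (m * M ^ r - M * m ^ r)) ^ r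
          * t ^ r := by
  rintro t ⟨hmt, -⟩
  have ht : 0 < t := hm.trans_le hmt
  have hr0 : r ≠ 0 := by rintro rfl; norm_num at hr
  have hr1 : r - 1 ≠ 0 := sub_ne_zero.2 (by rintro rfl; norm_num at hr)
  set a := (m * M ^ r - M * m ^ r) / (r - 1) with ha_def
  set b := (M ^ r - m ^ r) / r with hb_def
  have hc : m * M ^ r - M * m ^ r = (r - 1) * a := by rw [ha_def]; field_simp
  have hd : M ^ r - m ^ r = r * b := by rw [hb_def]; field_simp
  have ha : 0 < a := mul_rpow_sub_mul_rpow_div_pos hm hmM hr1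
  have hb : 0 < b := rpow_sub_rpow_div_pos hm hmM hr0
  have hL : ((M - t) / (M - m)) * m ^ r + ((t - m) / (M - m)) * M ^ r
      = (r * (b * t) - (r - 1) * a) / (M - m) := by
    rw [ha_def, hb_def]
    field_simp
    ring
  have hK : ((m * M ^ r - M * m ^ r) / ((r - 1) * (M - m)))
        * (((r - 1) / r) * (M ^ r - m ^ r) / (m * M ^ r - M * m ^ r)) ^ r * t ^ r
      = a * (b * t / a) ^ r / (M - m) := by
    have hba : (r - 1) / r * (r * b) / ((r - 1) * a) = b / a := by field_simp
    rw [hc, hd, hba, mul_div_mul_left _ _ hr1, mul_assoc, ← mul_rpow (div_pos hb ha).le ht.le,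
      div_mul_eq_mul_div b a t, div_mul_eq_mul_div]
  rw [hL, hK]
  exact div_le_div_of_nonneg_right
    (mul_sub_le_mul_div_rpow ha (mul_pos hb ht) (hr.imp le_of_lt le_of_lt))
    (sub_pos.2 hmM).le
end

section
/- Scalar version of Theorem 2.2 lower bound: let μ be a probability measure on [m,M] ⊂ (0,∞), f : [m,M] → (0,∞) twice differentiable with α ≤ f'', and K = max_{t∈[m,M]} L(t)/f(t) where L is the secant line of f. Then f(∫t dμ) ≥ (1/K)·(∫f dμ + (α/2)·((M+m)∫t dμ - Mm - ∫t² dμ)). -/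
open MeasureTheory Set

/-! Adding `(α/2)(t - m)(M - t)` to `f` lowers the second derivative by `α`, so
`g t = f t + (α/2)(t - m)(M - t)` is convex on `[m, M]` and agrees with `f` at both endpoints.
Hence `g` lies below the secant line `L` of `f`; integrating and using that `L` is affine gives
`∫ g dμ ≤ L (∫ t dμ) ≤ K f (∫ t dμ)`, and `K ≥ L m / f m = 1 > 0`. -/

theorem ContinuousOn.integrable_of_ae_mem_isCompact {X E : Type*} [TopologicalSpace X]
    [MeasurableSpace X] [OpensMeasurableSpace X] [T2Space X] [NormedAddCommGroup E]
    {μ : Measure X} [IsFiniteMeasureOnCompacts μ] {s : Set X} {g : X → E}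
    (hs : IsCompact s) (hμ : ∀ᵐ x ∂μ, x ∈ s) (hg : ContinuousOn g s) : Integrable g μ := by
  have := hg.integrableOn_compact (μ := μ) hs
  rwa [IntegrableOn, Measure.restrict_eq_self_of_ae_mem hμ] at this

noncomputable def secantLine (f : ℝ → ℝ) (a b t : ℝ) : ℝ :=
  (b - t) / (b - a) * f a + (t - a) / (b - a) * f b

theorem ConvexOn.le_secantLine {g : ℝ → ℝ} {a b x : ℝ} (hg : ConvexOn ℝ (Icc a b) g)
    (hab : a < b) (hx : x ∈ Icc a b) : g x ≤ secantLine g a b x := by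
  have hba : b - a ≠ 0 := (sub_pos.2 hab).ne'
  have := hg.2 (left_mem_Icc.2 hab.le) (right_mem_Icc.2 hab.le)
    (div_nonneg (sub_nonneg.2 hx.2) (sub_pos.2 hab).le)
    (div_nonneg (sub_nonneg.2 hx.1) (sub_pos.2 hab).le) (by field_simp; ring)
  simp only [smul_eq_mul] at this
  rwa [show (b - x) / (b - a) * a + (x - a) / (b - a) * b = x by field_simp; ring] at this

theorem secantLine_eq_add_mul (f : ℝ → ℝ) (a b t : ℝ) :
    secantLine f a b t = (b * f a - a * f b) / (b - a) + (f b - f a) / (b - a) * t := by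
  unfold secantLine; ring

theorem integral_secantLine {μ : Measure ℝ} [IsProbabilityMeasure μ]
    (hμ : Integrable (fun t => t) μ) (f : ℝ → ℝ) (a b : ℝ) :
    ∫ t, secantLine f a b t ∂μ = secantLine f a b (∫ t, t ∂μ) := by
  simp only [secantLine_eq_add_mul]
  rw [integral_add (integrable_const _) (hμ.const_mul _), integral_const, integral_const_mul]
  simp

theorem ConvexOn.integral_le_secantLine_integral {μ : Measure ℝ} [IsProbabilityMeasure μ]
    {g : ℝ → ℝ} {a b : ℝ} (hab : a < b) (hμ : ∀ᵐ t ∂μ, t ∈ Icc a b)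
    (hg : ConvexOn ℝ (Icc a b) g) (hgc : ContinuousOn g (Icc a b)) :
    ∫ t, g t ∂μ ≤ secantLine g a b (∫ t, t ∂μ) := by
  have hid : Integrable (fun t : ℝ => t) μ :=
    continuousOn_id.integrable_of_ae_mem_isCompact isCompact_Icc hμ
  rw [← integral_secantLine hid]
  refine integral_mono_ae (hgc.integrable_of_ae_mem_isCompact isCompact_Icc hμ)
    (Continuous.continuousOn (by unfold secantLine; fun_prop) |>.integrable_of_ae_mem_isCompact
      isCompact_Icc hμ) ?_
  filter_upwards [hμ] with t ht using hg.le_secantLine hab ht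

theorem convexOn_add_mul_sub_mul_sub {D : Set ℝ} (hD : Convex ℝ D) {f : ℝ → ℝ} {α : ℝ} (a b : ℝ)
    (hf : ∀ x, HasDerivAt f (deriv f x) x)
    (hf' : ∀ x, HasDerivAt (deriv f) (deriv (deriv f) x) x)
    (hα : ∀ x ∈ interior D, α ≤ deriv (deriv f) x) :
    ConvexOn ℝ D (fun t => f t + α / 2 * ((t - a) * (b - t))) := by
  have hq : ∀ x : ℝ, HasDerivAt (fun t => α / 2 * ((t - a) * (b - t)))
      (α / 2 * (a + b - 2 * x)) x := fun x =>
    ((((hasDerivAt_id' x).sub_const a).mul ((hasDerivAt_id' x).const_sub b)).const_mul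
      (α / 2)).congr_deriv (by ring)
  have hq' : ∀ x : ℝ, HasDerivAt (fun t => α / 2 * (a + b - 2 * t)) (-α) x := fun x =>
    ((((hasDerivAt_id' x).const_mul 2).const_sub (a + b)).const_mul (α / 2)).congr_deriv
      (by ring)
  refine convexOn_of_hasDerivWithinAt2_nonneg hD
    (fun x _ => ((hf x).add (hq x)).continuousAt.continuousWithinAt)
    (fun x _ => ((hf x).add (hq x)).hasDerivWithinAt)
    (fun x _ => ((hf' x).add (hq' x)).hasDerivWithinAt) fun x hx => ?_
  linarith [hα x hx]

theorem integral_mul_sub_mul_sub {μ : Measure ℝ} [IsProbabilityMeasure μ]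
    (h1 : Integrable (fun t => t) μ) (h2 : Integrable (fun t => t ^ 2) μ) (a b : ℝ) :
    ∫ t, (t - a) * (b - t) ∂μ = (a + b) * ∫ t, t ∂μ - a * b - ∫ t, t ^ 2 ∂μ := by
  have : (fun t => (t - a) * (b - t)) = fun t => ((a + b) * t - a * b) - t ^ 2 := by
    ext t; ring
  have h1' : Integrable (fun t => (a + b) * t - a * b) μ := (h1.const_mul _).sub (integrable_const _)
  rw [this, integral_sub h1' h2,
    integral_sub (h1.const_mul _) (integrable_const _), integral_const_mul]
  simp

theorem scalar_CDJ_ratio_lower_bound_general (m M α : ℝ) (hmM : m < M)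
    (μ : Measure ℝ) [IsProbabilityMeasure μ] (hsupp : μ (Set.Icc m M)ᶜ = 0)
    (f : ℝ → ℝ) (hpos : ∀ x ∈ Set.Icc m M, 0 < f x)
    (hf : ∀ x, HasDerivAt f (deriv f x) x)
    (hf' : ∀ x, HasDerivAt (deriv f) (deriv (deriv f) x) x)
    (hα : ∀ x ∈ Set.Icc m M, α ≤ deriv (deriv f) x)
    (K : ℝ)
    (hK : IsGreatest ((fun t => (((M - t) / (M - m)) * f m + ((t - m) / (M - m)) * f M) / f t)
      '' Set.Icc m M) K) :
    (1 / K) * ((∫ t, f t ∂μ)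
        + (α / 2) * ((M + m) * (∫ t, t ∂μ) - M * m - (∫ t, t ^ 2 ∂μ)))
      ≤ f (∫ t, t ∂μ) := by
  have hμ : ∀ᵐ t ∂μ, t ∈ Icc m M := ae_iff.2 hsupp
  have hint : ∀ g : ℝ → ℝ, Continuous g → Integrable g μ := fun g hg =>
    hg.continuousOn.integrable_of_ae_mem_isCompact isCompact_Icc hμ
  have hfc : Continuous f := continuous_iff_continuousAt.2 fun x => (hf x).continuousAt
  set g := fun t => f t + α / 2 * ((t - m) * (M - t))
  have hg : ∫ t, g t ∂μ ≤ secantLine f m M (∫ t, t ∂μ) := by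
    have hconv := convexOn_add_mul_sub_mul_sub (convex_Icc m M) m M hf hf' fun x hx =>
      hα x (interior_subset hx)
    have := hconv.integral_le_secantLine_integral hmM hμ (by fun_prop)
    -- the quadratic term vanishes at `m` and `M`, so `g` and `f` have the same secant line
    simpa [g, secantLine] using this
  have hmean : ∫ t, t ∂μ ∈ Icc m M :=
    (convex_Icc m M).integral_mem isClosed_Icc hμ (hint _ continuous_id)
  have hK1 : 1 ≤ K := hK.2 ⟨m, left_mem_Icc.2 hmM.le, by
    simp [sub_ne_zero.2 hmM.ne', (hpos m (left_mem_Icc.2 hmM.le)).ne']⟩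
  have hLK : secantLine f m M (∫ t, t ∂μ) ≤ K * f (∫ t, t ∂μ) :=
    (div_le_iff₀ (hpos _ hmean)).1 (hK.2 ⟨_, hmean, rfl⟩)
  have hgint : ∫ t, g t ∂μ = (∫ t, f t ∂μ)
      + (α / 2) * ((M + m) * (∫ t, t ∂μ) - M * m - (∫ t, t ^ 2 ∂μ)) := by
    rw [integral_add (hint f hfc) ((hint _ (by fun_prop)).const_mul _), integral_const_mul,
      integral_mul_sub_mul_sub (hint _ continuous_id) (hint _ (continuous_pow 2)), add_comm m,
      mul_comm m]
  calc (1 / K) * ((∫ t, f t ∂μ)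
        + (α / 2) * ((M + m) * (∫ t, t ∂μ) - M * m - (∫ t, t ^ 2 ∂μ)))
      ≤ (1 / K) * secantLine f m M (∫ t, t ∂μ) := by
        rw [← hgint]; exact mul_le_mul_of_nonneg_left hg (one_div_pos.2 (by linarith)).le
    _ ≤ f (∫ t, t ∂μ) := by
        rw [one_div_mul_eq_div, div_le_iff₀ (by linarith)]; linarith

/-- Scalar version of the Theorem 2.2 lower bound: for a probability measure `μ`
supported in `[m, M] ⊂ (0, ∞)`, a positive twice differentiable `f` with `α ≤ f''`
on `[m, M]`, and `K = sup {L t / f t : t ∈ [m, M]}` (the secant line constant),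
`f (∫ t ∂μ) ≥ (1/K) * (∫ f ∂μ + (α/2) ((M+m) ∫ t ∂μ - M m - ∫ t² ∂μ))`. -/
theorem scalar_CDJ_ratio_lower_bound (m M α : ℝ) (hm : 0 < m) (hmM : m < M)
    (μ : Measure ℝ) [IsProbabilityMeasure μ] (hsupp : μ (Set.Icc m M)ᶜ = 0)
    (f : ℝ → ℝ) (hpos : ∀ x ∈ Set.Icc m M, 0 < f x)
    (hf : ∀ x, HasDerivAt f (deriv f x) x)
    (hf' : ∀ x, HasDerivAt (deriv f) (deriv (deriv f) x) x)
    (hα : ∀ x ∈ Set.Icc m M, α ≤ deriv (deriv f) x)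
    (K : ℝ)
    (hK : IsGreatest ((fun t => (((M - t) / (M - m)) * f m + ((t - m) / (M - m)) * f M) / f t)
      '' Set.Icc m M) K) :
    (1 / K) * ((∫ t, f t ∂μ)
        + (α / 2) * ((M + m) * (∫ t, t ∂μ) - M * m - (∫ t, t ^ 2 ∂μ)))
      ≤ f (∫ t, t ∂μ) :=
  scalar_CDJ_ratio_lower_bound_general m M α hmM μ hsupp f hpos hf hf' hα K hK
end
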